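/- Let W ∈ ℝ^{n×n} be a symmetric matrix with nonnegative entries and zero diagonal (the weighted adjacency matrix of an undirected graph on n vertices), let D be the diagonal degree matrix with D_{ii} = Σ_j W_{ij}, and let L = D − W be the combinatorial Laplacian. Suppose the graph has exactly k connected components, each containing exactly n/k vertices. Then the kernel of L has dimension k (equivalently, the k smallest eigenvalues of L are all zero and λ_{k+1} > 0), and for any matrix Q_k ∈ ℝ^{n×k} whose columns form an orthonormal basis of ker(L), the cumulative coherence ν_k = max_{1≤i≤n} √n ‖Q_k^⊤ e_i‖₂ satisfies ν_k = √k. -/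

import Mathlib

/-!
By symmetry of `W`, `2 xᵀ L x = ∑ᵢⱼ Wᵢⱼ (xᵢ - xⱼ)²`, so `L x = 0` forces `xᵢ = xⱼ` along every
edge of positive weight, hence on every connected component. Thus `ker L` is the image of the
injective pull-back `a ↦ a ∘ c : ℝᵏ → ℝⁿ` and has dimension `k`. Writing an orthonormal basis of
`ker L` as `Q = A ∘ c`, equal fibres give `Qᵀ Q = m Aᵀ A`, so `√m A` is an orthogonal matrix: its
rows are unit vectors and every row of `Q` has squared norm `1/m = k/n`.
-/

open Matrix

/-- Frobenius norm of a real matrix. -/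
noncomputable def frobNorm {m n : Type*} [Fintype m] [Fintype n] (A : Matrix m n ℝ) : ℝ :=
  Real.sqrt (∑ i, ∑ j, (A i j) ^ 2)

/-- Euclidean norm of a real vector. -/
noncomputable def vecNorm {n : Type*} [Fintype n] (x : n → ℝ) : ℝ :=
  Real.sqrt (∑ i, (x i) ^ 2)

/-- A row-selection matrix: its rows are distinct standard basis vectors of `ℝ^p`. -/
def IsRowSelection {ρ p : ℕ} (M : Matrix (Fin ρ) (Fin p) ℝ) : Prop :=
  ∃ f : Fin ρ → Fin p, Function.Injective f ∧ ∀ i j, M i j = if j = f i then 1 else 0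

/-- A column-selection matrix: its columns are distinct standard basis vectors of `ℝ^n`. -/
def IsColSelection {n ρ : ℕ} (M : Matrix (Fin n) (Fin ρ) ℝ) : Prop :=
  ∃ f : Fin ρ → Fin n, Function.Injective f ∧ ∀ i j, M i j = if i = f j then 1 else 0

/-- `y` lies in the span of the columns of `P`. -/
def inColSpan {p k : ℕ} (P : Matrix (Fin p) (Fin k) ℝ) (y : Fin p → ℝ) : Prop :=
  ∃ c : Fin k → ℝ, y = P.mulVec c

/-- `Y ∈ LR(P, Q)`: every column of `Y` lies in the column span of `P` and every row of `Y`
lies in the column span of `Q`. -/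
def memLR {p n kr kc : ℕ} (P : Matrix (Fin p) (Fin kr) ℝ) (Q : Matrix (Fin n) (Fin kc) ℝ)
    (Y : Matrix (Fin p) (Fin n) ℝ) : Prop :=
  (∀ j, inColSpan P (fun i => Y i j)) ∧ (∀ i, inColSpan Q (fun j => Y i j))

/-- Graph cumulative coherence `ν = max_i √n ‖Q^⊤ e_i‖₂`. -/
noncomputable def coherence {n k : ℕ} (Q : Matrix (Fin n) (Fin k) ℝ) : ℝ :=
  ⨆ i : Fin n, Real.sqrt n * vecNorm (fun j => Q i j)

open scoped Classical

theorem Relation.forall_reflTransGen_imp_eq_iff {α β : Type*} {r : α → α → Prop} {f : α → β} :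
    (∀ a b, ReflTransGen r a b → f a = f b) ↔ ∀ a b, r a b → f a = f b := by
  refine ⟨fun h a b hab => h a b (.single hab), fun h a b hab => ?_⟩
  simpa only [reflTransGen_eq_self] using hab.lift f h

theorem LinearMap.mem_range_funLeft_iff {R M ι κ : Type*} [Semiring R] [AddCommMonoid M]
    [Module R M] {c : ι → κ} (hc : c.Surjective) {x : ι → M} :
    x ∈ LinearMap.range (LinearMap.funLeft R M c) ↔ ∀ i j, c i = c j → x i = x j := by
  constructor
  · rintro ⟨y, rfl⟩ i j h
    simp only [funLeft_apply, h]
  · intro h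
    exact ⟨x ∘ Function.surjInv hc, funext fun i => h _ _ (Function.surjInv_eq hc (c i))⟩

theorem Function.surjective_of_card_fiber {ι κ : Type*} [Fintype ι] [DecidableEq κ] {c : ι → κ}
    {m : ℕ} (hm : 0 < m) (hc : ∀ t, (Finset.univ.filter (fun i => c i = t)).card = m) :
    c.Surjective := fun t => by
  obtain ⟨i, hi⟩ := Finset.card_pos.mp ((hc t).symm ▸ hm)
  exact ⟨i, (Finset.mem_filter.mp hi).2⟩

section Fibers

variable {ι κ : Type*} [Fintype ι] [Fintype κ] [DecidableEq κ] {c : ι → κ} {m : ℕ}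

theorem Finset.sum_comp_of_card_fiber {M : Type*} [AddCommMonoid M]
    (hc : ∀ t, (Finset.univ.filter (fun i => c i = t)).card = m) (F : κ → M) :
    ∑ i, F (c i) = m • ∑ t, F t := by
  rw [← Finset.sum_fiberwise Finset.univ c, Finset.smul_sum]
  refine Finset.sum_congr rfl fun t _ => ?_
  rw [Finset.sum_congr rfl fun i hi => by rw [(Finset.mem_filter.mp hi).2], Finset.sum_const, hc]

theorem Matrix.transpose_mul_self_submatrix_of_card_fiber {R : Type*} [CommSemiring R] {k : Type*}
    (hc : ∀ t, (Finset.univ.filter (fun i => c i = t)).card = m) (A : Matrix κ k R) :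
    (A.submatrix c id)ᵀ * A.submatrix c id = (m : R) • (Aᵀ * A) := by
  ext j l
  simp only [mul_apply, transpose_apply, submatrix_apply, id, smul_apply, smul_eq_mul]
  rw [Finset.sum_comp_of_card_fiber hc (fun t => A t j * A t l), nsmul_eq_mul]

theorem Matrix.sum_row_sq_eq_inv_of_submatrix_orthonormal
    (hc : ∀ t, (Finset.univ.filter (fun i => c i = t)).card = m) {A : Matrix κ κ ℝ}
    (hA : (A.submatrix c id)ᵀ * A.submatrix c id = 1) (t : κ) :
    ∑ j, A t j ^ 2 = (m : ℝ)⁻¹ := by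
  rw [transpose_mul_self_submatrix_of_card_fiber hc, ← mul_smul_comm] at hA
  have hdiag := congrArg (fun M : Matrix κ κ ℝ => M t t) (mul_eq_one_comm.mp hA)
  simp only [mul_apply, transpose_apply, smul_apply, smul_eq_mul, one_apply_eq] at hdiag
  refine eq_inv_of_mul_eq_one_right ?_
  rw [← hdiag, Finset.mul_sum]
  exact Finset.sum_congr rfl fun j _ => by ring

end Fibers

noncomputable def weightedLaplacian {ι : Type*} [Fintype ι] [DecidableEq ι] (W : Matrix ι ι ℝ) :
    Matrix ι ι ℝ :=
  diagonal (fun i => ∑ j, W i j) - W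

section Laplacian

variable {ι : Type*} [Fintype ι] [DecidableEq ι] {W : Matrix ι ι ℝ}

theorem weightedLaplacian_mulVec_apply (x : ι → ℝ) (i : ι) :
    (weightedLaplacian W *ᵥ x) i = ∑ j, W i j * (x i - x j) := by
  rw [weightedLaplacian, sub_mulVec, Pi.sub_apply, mulVec_diagonal, mulVec, dotProduct,
    Finset.sum_mul, ← Finset.sum_sub_distrib]
  simp only [mul_sub]

theorem two_mul_dotProduct_weightedLaplacian_mulVec (hW : W.IsSymm) (x : ι → ℝ) :
    2 * (x ⬝ᵥ weightedLaplacian W *ᵥ x) = ∑ i, ∑ j, W i j * (x i - x j) ^ 2 := by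
  have hS : x ⬝ᵥ weightedLaplacian W *ᵥ x = ∑ i, ∑ j, W i j * (x i - x j) * x i := by
    simp only [dotProduct, weightedLaplacian_mulVec_apply, Finset.mul_sum]
    exact Fintype.sum_congr _ _ fun i => Fintype.sum_congr _ _ fun j => by ring
  have hS' : x ⬝ᵥ weightedLaplacian W *ᵥ x = ∑ i, ∑ j, W i j * (x j - x i) * x j := by
    rw [hS, Finset.sum_comm]
    exact Fintype.sum_congr _ _ fun i => Fintype.sum_congr _ _ fun j => by rw [hW.apply]
  rw [two_mul]
  nth_rewrite 1 [hS]
  rw [hS', ← Finset.sum_add_distrib]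
  refine Fintype.sum_congr _ _ fun i => ?_
  rw [← Finset.sum_add_distrib]
  exact Fintype.sum_congr _ _ fun j => by ring

theorem weightedLaplacian_mulVec_eq_zero_iff (hW : W.IsSymm) (hW₀ : ∀ i j, 0 ≤ W i j)
    {x : ι → ℝ} : weightedLaplacian W *ᵥ x = 0 ↔ ∀ i j, 0 < W i j → x i = x j := by
  constructor
  · intro hx i j hij
    have hsum : ∑ i, ∑ j, W i j * (x i - x j) ^ 2 = 0 := by
      rw [← two_mul_dotProduct_weightedLaplacian_mulVec hW, hx, dotProduct_zero, mul_zero]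
    have hterm_nonneg : ∀ i j, 0 ≤ W i j * (x i - x j) ^ 2 := fun i j =>
      mul_nonneg (hW₀ i j) (sq_nonneg _)
    have hrow := congrFun ((Fintype.sum_eq_zero_iff_of_nonneg fun i =>
      Finset.sum_nonneg fun j _ => hterm_nonneg i j).mp hsum) i
    have hterm := congrFun ((Fintype.sum_eq_zero_iff_of_nonneg (hterm_nonneg i)).mp hrow) j
    have hsq : (x i - x j) ^ 2 = 0 := (mul_eq_zero.mp hterm).resolve_left hij.ne'
    exact sub_eq_zero.mp (pow_eq_zero_iff two_ne_zero |>.mp hsq)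
  · intro h
    funext i
    rw [weightedLaplacian_mulVec_apply, Pi.zero_apply]
    refine Fintype.sum_eq_zero _ fun j => ?_
    rcases (hW₀ i j).eq_or_lt with hij | hij
    · rw [← hij, zero_mul]
    · rw [h i j hij, sub_self, mul_zero]

theorem ker_mulVecLin_weightedLaplacian_eq_range_funLeft {κ : Type*} (hW : W.IsSymm)
    (hW₀ : ∀ i j, 0 ≤ W i j) {c : ι → κ} (hc : c.Surjective)
    (hcomp : ∀ i j, c i = c j ↔ Relation.ReflTransGen (fun x y => 0 < W x y) i j) :
    LinearMap.ker (weightedLaplacian W).mulVecLin =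
      LinearMap.range (LinearMap.funLeft ℝ ℝ c) := by
  ext x
  rw [LinearMap.mem_ker, mulVecLin_apply, weightedLaplacian_mulVec_eq_zero_iff hW hW₀,
    LinearMap.mem_range_funLeft_iff hc, ← Relation.forall_reflTransGen_imp_eq_iff]
  simp only [hcomp]

end Laplacian

theorem coherence_eq_sqrt_of_sum_row_sq {n k m : ℕ} (hm : 0 < m) (hn : n = k * m)
    {Q : Matrix (Fin n) (Fin k) ℝ} (hQ : ∀ i, ∑ j, Q i j ^ 2 = (m : ℝ)⁻¹) :
    coherence Q = Real.sqrt k := by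
  have hrow : ∀ i, Real.sqrt n * vecNorm (fun j => Q i j) = Real.sqrt k := fun i => by
    have hm' : (m : ℝ) ≠ 0 := by positivity
    rw [vecNorm, hQ i, ← Real.sqrt_mul (Nat.cast_nonneg n), hn, Nat.cast_mul,
      mul_inv_cancel_right₀ hm']
  obtain rfl | hk := Nat.eq_zero_or_pos k
  · rw [zero_mul] at hn
    subst hn
    simp [coherence]
  · have : Nonempty (Fin n) := ⟨⟨0, hn ▸ Nat.mul_pos hk hm⟩⟩
    exact (iSup_congr hrow).trans ciSup_const

theorem laplacian_components_coherence
    (n k m : ℕ) (hm : 0 < m) (hn : n = k * m)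
    (W : Matrix (Fin n) (Fin n) ℝ)
    (hWsymm : Wᵀ = W) (hWnonneg : ∀ i j, 0 ≤ W i j)
    (L : Matrix (Fin n) (Fin n) ℝ)
    (hLdef : L = Matrix.diagonal (fun i => ∑ j, W i j) - W)
    (c : Fin n → Fin k)
    (hcomp : ∀ i j, c i = c j ↔ Relation.ReflTransGen (fun x y => 0 < W x y) i j)
    (hsize : ∀ t : Fin k, (Finset.univ.filter (fun i => c i = t)).card = m) :
    Module.finrank ℝ (LinearMap.ker L.mulVecLin) = k ∧
    ∀ Q : Matrix (Fin n) (Fin k) ℝ,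
      Qᵀ * Q = 1 →
      (∀ j, L.mulVec (fun i => Q i j) = 0) →
      Submodule.span ℝ (Set.range (fun j => fun i => Q i j)) =
        LinearMap.ker L.mulVecLin →
      coherence Q = Real.sqrt k := by
  obtain rfl : L = weightedLaplacian W := hLdef
  have hc : c.Surjective := Function.surjective_of_card_fiber hm hsize
  have hker := ker_mulVecLin_weightedLaplacian_eq_range_funLeft hWsymm hWnonneg hc hcomp
  refine ⟨?_, fun Q hQ hQker _ => ?_⟩
  · rw [hker, LinearMap.finrank_range_of_inj (LinearMap.funLeft_injective_of_surjective _ _ _ hc),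
      Module.finrank_fin_fun]
  · have hcol : ∀ j, ∃ a : Fin k → ℝ, LinearMap.funLeft ℝ ℝ c a = fun i => Q i j := fun j =>
      LinearMap.mem_range.mp (hker ▸ LinearMap.mem_ker.mpr (hQker j))
    choose a ha using hcol
    have hQa : Q = (of fun t j => a j t).submatrix c id := by
      ext i j
      exact (congrFun (ha j) i).symm
    rw [hQa] at hQ
    exact coherence_eq_sqrt_of_sum_row_sq hm hn fun i =>
      hQa ▸ sum_row_sq_eq_inv_of_submatrix_orthonormal hsize hQ (c i)
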